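/- arXiv:1908.01567 — 2 statements merged into one kernel-verified Lean document; each statement's English description precedes it below -/
import Mathlib

section
/- The growth function equals the minimal weighted ℓ₁-norm: ρ_{q,D}(z,Y) = min{ Σ_{j=1}^n |w_j| ‖y_j − z‖₂^q : w ∈ ℝ^n satisfies Dp(z) = Σ_j w_j p(y_j) for all p ∈ Π^d_q }, whenever ρ_{q,D}(z,Y) < ∞. -/
noncomputable section
open MvPolynomial

/-- Iterated partial derivative `∂^α`. -/
def mderiv (d : ℕ) (α : Fin d →₀ ℕ) : Module.End ℝ (MvPolynomial (Fin d) ℝ) :=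
  ((List.finRange d).map fun i => ((pderiv i : Derivation ℝ _ _).toLinearMap) ^ (α i)).prod

/-- `D p (x)` for the linear differential operator `D = ∑_α c_α ∂^α`
with variable coefficients `c_α`. -/
def Dapply (d : ℕ) (c : (Fin d →₀ ℕ) →₀ (EuclideanSpace ℝ (Fin d) → ℝ))
    (p : MvPolynomial (Fin d) ℝ) (x : EuclideanSpace ℝ (Fin d)) : ℝ :=
  ∑ α ∈ c.support, c α x * eval (fun i => x i) (mderiv d α p)

/-- The growth function `ρ_{q,D}(z,Y)` for `Y = {y 1, ..., y n}`. -/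
def growth (d q : ℕ) (c : (Fin d →₀ ℕ) →₀ (EuclideanSpace ℝ (Fin d) → ℝ))
    (z : EuclideanSpace ℝ (Fin d)) {n : ℕ} (y : Fin n → EuclideanSpace ℝ (Fin d)) : EReal :=
  sSup {r : EReal | ∃ p : MvPolynomial (Fin d) ℝ, p.totalDegree < q ∧
    (∀ j, |eval (fun i => y j i) p| ≤ ‖y j - z‖ ^ q) ∧ r = ((Dapply d c p z : ℝ) : EReal)}

namespace GrowthLP

variable (d q n : ℕ) (c : (Fin d →₀ ℕ) →₀ (EuclideanSpace ℝ (Fin d) → ℝ))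
  (z : EuclideanSpace ℝ (Fin d)) (y : Fin n → EuclideanSpace ℝ (Fin d))

/-- `p ↦ D p (z)` as a linear map. -/
def L : MvPolynomial (Fin d) ℝ →ₗ[ℝ] ℝ where
  toFun p := Dapply d c p z
  map_add' p p' := by
    simp [Dapply, map_add, mul_add, Finset.sum_add_distrib]
  map_smul' r p := by
    simp only [Dapply, map_smul, smul_eval, RingHom.id_apply, smul_eq_mul, Finset.mul_sum]
    exact Finset.sum_congr rfl fun α _ => by ring

/-- Evaluation at the points `y j` as a linear map. -/
def E : MvPolynomial (Fin d) ℝ →ₗ[ℝ] (Fin n → ℝ) where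
  toFun p := fun j => eval (fun i => y j i) p
  map_add' p p' := by funext j; simp
  map_smul' r p := by funext j; simp [smul_eval]

/-- Polynomials of total degree `< q` vanishing at the degenerate points. -/
def Vt (hq : 0 < q) : Submodule ℝ (MvPolynomial (Fin d) ℝ) where
  carrier := {p | p.totalDegree < q ∧ ∀ j, y j = z → eval (fun i => y j i) p = 0}
  zero_mem' := by simp [totalDegree_zero, hq]
  add_mem' := by
    rintro p p' ⟨h1, h2⟩ ⟨h1', h2'⟩
    exact ⟨lt_of_le_of_lt (totalDegree_add p p') (max_lt h1 h1'),
      fun j hj => by simp [h2 j hj, h2' j hj]⟩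
  smul_mem' := by
    rintro r p ⟨h1, h2⟩
    exact ⟨lt_of_le_of_lt (totalDegree_smul_le r p) h1,
      fun j hj => by simp [smul_eval, h2 j hj]⟩

end GrowthLP

set_option maxHeartbeats 1000000 in
/-- LP duality: the growth function equals the minimal weighted ℓ₁-norm over all
weight vectors exact on `Π^d_q`, whenever `ρ_{q,D}(z,Y) < ∞`. -/
theorem growth_eq_min_weighted_l1 (d q κ n : ℕ)
    (c : (Fin d →₀ ℕ) →₀ (EuclideanSpace ℝ (Fin d) → ℝ))
    (horder : ∀ α ∈ c.support, (α.sum fun _ k => k) ≤ κ) (hq : κ < q)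
    (z : EuclideanSpace ℝ (Fin d)) (y : Fin n → EuclideanSpace ℝ (Fin d))
    (hfin : growth d q c z y < ⊤) :
    ∃ w : Fin n → ℝ,
      (∀ p : MvPolynomial (Fin d) ℝ, p.totalDegree < q →
        Dapply d c p z = ∑ j, w j * eval (fun i => y j i) p) ∧
      growth d q c z y = ((∑ j, |w j| * ‖y j - z‖ ^ q : ℝ) : EReal) ∧
      (∀ w' : Fin n → ℝ,
        (∀ p : MvPolynomial (Fin d) ℝ, p.totalDegree < q →
          Dapply d c p z = ∑ j, w' j * eval (fun i => y j i) p) →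
        ∑ j, |w j| * ‖y j - z‖ ^ q ≤ ∑ j, |w' j| * ‖y j - z‖ ^ q) := by
  classical
  have hq1 : 0 < q := lt_of_le_of_lt (Nat.zero_le κ) hq
  have hb0 : ∀ j, (0:ℝ) ≤ ‖y j - z‖ ^ q := fun j => by positivity
  have hbpos : ∀ j, y j ≠ z → (0:ℝ) < ‖y j - z‖ ^ q := by
    intro j hj
    have : (0:ℝ) < ‖y j - z‖ := norm_pos_iff.mpr (sub_ne_zero.mpr hj)
    positivity
  have hbzero : ∀ j, y j = z → ‖y j - z‖ ^ q = 0 := by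
    intro j hj; rw [hj, sub_self, norm_zero, zero_pow hq1.ne']
  -- the primal value set
  set A : Set ℝ := {r | ∃ p : MvPolynomial (Fin d) ℝ, p.totalDegree < q ∧
    (∀ j, |eval (fun i => y j i) p| ≤ ‖y j - z‖ ^ q) ∧ r = Dapply d c p z} with hA
  have h0A : (0:ℝ) ∈ A := by
    refine ⟨0, by simpa using hq1, fun j => by simpa using hb0 j, ?_⟩
    simp [Dapply]
  have hgrowthA : growth d q c z y = sSup ((fun r : ℝ => (r : EReal)) '' A) := by
    unfold growth
    congr 1
    ext r
    constructor
    · rintro ⟨p, h1, h2, rfl⟩; exact ⟨Dapply d c p z, ⟨p, h1, h2, rfl⟩, rfl⟩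
    · rintro ⟨a, ⟨p, h1, h2, rfl⟩, rfl⟩; exact ⟨p, h1, h2, rfl⟩
  have hAbdd : BddAbove A := by
    rw [hgrowthA] at hfin
    obtain ⟨m, hm1, hm2⟩ := exists_between hfin
    refine ⟨m.toReal, fun a ha => ?_⟩
    have hle : (a : EReal) ≤ sSup ((fun r : ℝ => (r : EReal)) '' A) :=
      le_sSup ⟨a, ha, rfl⟩
    have hlt : (a : EReal) < m := lt_of_le_of_lt hle hm1
    have hmb : m ≠ ⊥ := fun h => by simp [h] at hlt
    have : (a : EReal) ≤ (m.toReal : EReal) := by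
      rw [EReal.coe_toReal hm2.ne hmb]; exact hlt.le
    exact_mod_cast this
  set g : ℝ := sSup A with hgdef
  have hmemle : ∀ r ∈ A, r ≤ g := fun r hr => le_csSup hAbdd hr
  have hg0 : 0 ≤ g := hmemle 0 h0A
  have hgrowth2 : growth d q c z y = (g : EReal) := by
    rw [hgrowthA]
    apply IsLUB.sSup_eq
    constructor
    · rintro x ⟨a, ha, rfl⟩
      show (a:EReal) ≤ (g:EReal)
      exact_mod_cast hmemle a ha
    · intro x hx
      induction x with
      | bot =>
        have : ((0:ℝ) : EReal) ≤ ⊥ := hx ⟨0, h0A, rfl⟩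
        simp at this
      | coe r =>
        have : g ≤ r := csSup_le ⟨0, h0A⟩ fun a ha => by
          have : (a:EReal) ≤ (r:EReal) := hx ⟨a, ha, rfl⟩
          exact_mod_cast this
        exact_mod_cast this
      | top => exact le_top
  -- Step 4: D vanishes on polynomials vanishing at all points
  have hker : ∀ p : MvPolynomial (Fin d) ℝ, p.totalDegree < q →
      (∀ j, eval (fun i => y j i) p = 0) → Dapply d c p z = 0 := by
    intro p hdeg hev
    by_contra hne
    have hmem : ∀ t : ℝ, t * Dapply d c p z ∈ A := by
      intro t
      refine ⟨t • p, lt_of_le_of_lt (totalDegree_smul_le t p) hdeg,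
        fun j => by simp [smul_eval, hev j, hb0 j], ?_⟩
      exact ((GrowthLP.L d c z).map_smul t p).symm
    have := hmemle _ (hmem ((g + 1) / Dapply d c p z))
    rw [div_mul_cancel₀ _ hne] at this
    linarith
  -- subspace setup
  set Vt : Submodule ℝ (MvPolynomial (Fin d) ℝ) := GrowthLP.Vt d q n z y hq1 with hVt
  set EV : Vt →ₗ[ℝ] (Fin n → ℝ) := (GrowthLP.E d n y).comp Vt.subtype with hEV
  set LV : Vt →ₗ[ℝ] ℝ := (GrowthLP.L d c z).comp Vt.subtype with hLV
  have hEVapp : ∀ v : Vt, ∀ j, EV v j = eval (fun i => y j i) (v : MvPolynomial (Fin d) ℝ) :=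
    fun v j => rfl
  have hLVapp : ∀ v : Vt, LV v = Dapply d c (v : MvPolynomial (Fin d) ℝ) z := fun v => rfl
  have hkerV : LinearMap.ker EV ≤ LinearMap.ker LV := by
    rintro ⟨p, hp⟩ hpk
    rw [LinearMap.mem_ker] at hpk ⊢
    exact hker p hp.1 fun j => congrFun hpk j
  set lbar : LinearMap.range EV →ₗ[ℝ] ℝ :=
    (Submodule.liftQ (LinearMap.ker EV) LV hkerV).comp
      (LinearMap.quotKerEquivRange EV).symm.toLinearMap with hlbar
  have hlbar_app : ∀ v : Vt, lbar ⟨EV v, LinearMap.mem_range_self EV v⟩ = LV v := by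
    intro v
    have h1 : (LinearMap.quotKerEquivRange EV) (Submodule.Quotient.mk v)
        = ⟨EV v, LinearMap.mem_range_self EV v⟩ :=
      Subtype.ext (LinearMap.quotKerEquivRange_apply_mk EV v)
    rw [hlbar]
    simp only [LinearMap.coe_comp, Function.comp_apply, LinearEquiv.coe_coe]
    rw [← h1, LinearEquiv.symm_apply_apply, Submodule.liftQ_apply]
  -- the sublinear functional
  set B : (Fin n → ℝ) → ℝ :=
    fun x => ⨆ j, (if y j = z then 0 else |x j| / ‖y j - z‖ ^ q) with hB
  have hBddR : ∀ f : Fin n → ℝ, BddAbove (Set.range f) := fun f =>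
    (Set.finite_range f).bddAbove
  have hBnonneg : ∀ x, 0 ≤ B x := by
    intro x
    rcases isEmpty_or_nonempty (Fin n) with h | h
    · simp [hB, Real.iSup_of_isEmpty]
    · obtain ⟨j⟩ := h
      refine le_trans ?_ (le_ciSup (hBddR _) j)
      split_ifs with h'
      · exact le_refl 0
      · positivity
  have hBterm : ∀ x j, y j ≠ z → |x j| ≤ B x * ‖y j - z‖ ^ q := by
    intro x j hj
    have h1 : |x j| / ‖y j - z‖ ^ q ≤ B x := by
      have := le_ciSup (hBddR fun j => (if y j = z then (0:ℝ) else |x j| / ‖y j - z‖ ^ q)) j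
      rwa [if_neg hj] at this
    exact (div_le_iff₀ (hbpos j hj)).mp h1
  have hBle : ∀ x (M : ℝ), 0 ≤ M → (∀ j, y j ≠ z → |x j| ≤ M * ‖y j - z‖ ^ q) → B x ≤ M := by
    intro x M hM hx
    rcases isEmpty_or_nonempty (Fin n) with h | h
    · simp [hB, Real.iSup_of_isEmpty, hM]
    · refine ciSup_le fun j => ?_
      split_ifs with h'
      · exact hM
      · exact (div_le_iff₀ (hbpos j h')).mpr (hx j h')
  set N : (Fin n → ℝ) → ℝ := fun x => g * B x with hN
  have hNhom : ∀ t : ℝ, 0 < t → ∀ x, N (t • x) = t * N x := by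
    intro t ht x
    have hBsmul : B (t • x) = t * B x := by
      have hterm : ∀ j, (if y j = z then (0:ℝ) else |(t • x) j| / ‖y j - z‖ ^ q)
          = t * (if y j = z then 0 else |x j| / ‖y j - z‖ ^ q) := by
        intro j
        split_ifs with h'
        · ring
        · simp only [Pi.smul_apply, smul_eq_mul, abs_mul, abs_of_pos ht]; ring
      simp only [hB, hterm]
      rw [← Real.mul_iSup_of_nonneg ht.le]
    simp only [hN, hBsmul]; ring
  have hNadd : ∀ x x', N (x + x') ≤ N x + N x' := by
    intro x x'
    have hBadd : B (x + x') ≤ B x + B x' := by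
      refine hBle _ _ (add_nonneg (hBnonneg x) (hBnonneg x')) fun j hj => ?_
      calc |(x + x') j| ≤ |x j| + |x' j| := abs_add_le _ _
        _ ≤ B x * ‖y j - z‖ ^ q + B x' * ‖y j - z‖ ^ q :=
            add_le_add (hBterm x j hj) (hBterm x' j hj)
        _ = (B x + B x') * ‖y j - z‖ ^ q := by ring
    calc N (x + x') = g * B (x + x') := rfl
      _ ≤ g * (B x + B x') := mul_le_mul_of_nonneg_left hBadd hg0
      _ = N x + N x' := by simp only [hN]; ring
  -- domination of lbar by N on the range of EV
  set fp : (Fin n → ℝ) →ₗ.[ℝ] ℝ := ⟨LinearMap.range EV, lbar⟩ with hfp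
  have hdom : ∀ xv : fp.domain, fp xv ≤ N xv := by
    rintro ⟨x, hx⟩
    obtain ⟨v, rfl⟩ := hx
    have hfpval : fp ⟨EV v, LinearMap.mem_range_self EV v⟩ = LV v := hlbar_app v
    rw [hfpval]
    -- now show LV v ≤ N (EV v)
    have key : ∀ ε : ℝ, 0 < ε → LV v ≤ g * B (EV v) + ε := by
      intro ε hε
      obtain ⟨t, htdef⟩ : ∃ t : ℝ, t = B (EV v) + ε / (g + 1) := ⟨_, rfl⟩
      have hεg : 0 < ε / (g + 1) := by positivity
      have ht0 : 0 < t := by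
        have := hBnonneg (EV v)
        rw [htdef]
        linarith
      have hmemA : (1 / t) * LV v ∈ A := by
        refine ⟨(1 / t) • (v : MvPolynomial (Fin d) ℝ),
          lt_of_le_of_lt (totalDegree_smul_le _ _) v.2.1, fun j => ?_, ?_⟩
        · rw [smul_eval, abs_mul]
          by_cases hj : y j = z
          · rw [v.2.2 j hj]
            simp [hb0 j]
          · have h1 : |eval (fun i => y j i) (v : MvPolynomial (Fin d) ℝ)|
                ≤ t * ‖y j - z‖ ^ q := by
              have h2 := hBterm (EV v) j hj
              rw [hEVapp v j] at h2
              have h3 : B (EV v) * ‖y j - z‖ ^ q ≤ t * ‖y j - z‖ ^ q := by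
                apply mul_le_mul_of_nonneg_right _ (hb0 j)
                rw [htdef]
                linarith
              linarith
            have habs : |1 / t| = 1 / t := abs_of_pos (by positivity)
            rw [habs]
            calc (1 / t) * |eval (fun i => y j i) (v : MvPolynomial (Fin d) ℝ)|
                ≤ (1 / t) * (t * ‖y j - z‖ ^ q) :=
                  mul_le_mul_of_nonneg_left h1 (by positivity)
              _ = ‖y j - z‖ ^ q := by field_simp
        · have := (GrowthLP.L d c z).map_smul (1 / t) (v : MvPolynomial (Fin d) ℝ)
          rw [hLVapp v]
          exact this.symm
      have h2 : (1 / t) * LV v ≤ g := hmemle _ hmemA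
      have h3 : LV v ≤ t * g := by
        have := mul_le_mul_of_nonneg_left h2 ht0.le
        rw [← mul_assoc] at this
        field_simp at this
        calc LV v = t * ((1/t) * LV v) := by field_simp
          _ ≤ t * g := mul_le_mul_of_nonneg_left h2 ht0.le
      have h4 : t * g ≤ g * B (EV v) + ε := by
        have hgp : (0:ℝ) < g + 1 := by linarith
        have h9 : g * (ε / (g + 1)) ≤ ε := by
          rw [mul_comm, div_mul_eq_mul_div, div_le_iff₀ hgp]
          nlinarith
        rw [htdef]
        nlinarith
      linarith
    by_contra hcon
    push_neg at hcon
    have := key ((LV v - g * B (EV v)) / 2) (by simp only [hN] at hcon; linarith)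
    simp only [hN] at hcon
    linarith
  -- Hahn-Banach
  obtain ⟨wl, hwext, hwle⟩ := exists_extension_of_le_sublinear fp N hNhom hNadd hdom
  set w0 : Fin n → ℝ := fun j => wl (fun j' => if j = j' then 1 else 0) with hw0
  have hwlapp : ∀ x : Fin n → ℝ, wl x = ∑ j, x j * w0 j := by
    intro x
    conv_lhs => rw [pi_eq_sum_univ x, map_sum]
    exact Finset.sum_congr rfl fun j _ => by rw [map_smul]; simp [hw0]
  have hwEV : ∀ v : Vt, wl (EV v) = LV v := by
    intro v
    have h := hwext ⟨EV v, LinearMap.mem_range_self EV v⟩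
    exact h.trans (hlbar_app v)
  -- cost bound : ∑ |w0 j| * b j ≤ g
  have hcost : ∑ j, |w0 j| * ‖y j - z‖ ^ q ≤ g := by
    set xs : Fin n → ℝ := fun j => if 0 ≤ w0 j then ‖y j - z‖ ^ q else -(‖y j - z‖ ^ q)
      with hxs
    have h1 : wl xs = ∑ j, |w0 j| * ‖y j - z‖ ^ q := by
      rw [hwlapp xs]
      refine Finset.sum_congr rfl fun j _ => ?_
      simp only [hxs]
      split_ifs with h'
      · rw [abs_of_nonneg h']; ring
      · rw [abs_of_neg (lt_of_not_ge h')]; ring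
    have h3 : B xs ≤ 1 := by
      refine hBle _ _ zero_le_one fun j hj => ?_
      have : |xs j| = ‖y j - z‖ ^ q := by
        simp only [hxs]
        split_ifs
        · exact abs_of_nonneg (hb0 j)
        · rw [abs_neg]; exact abs_of_nonneg (hb0 j)
      rw [this, one_mul]
    calc ∑ j, |w0 j| * ‖y j - z‖ ^ q = wl xs := h1.symm
      _ ≤ N xs := hwle xs
      _ = g * B xs := rfl
      _ ≤ g * 1 := mul_le_mul_of_nonneg_left h3 hg0
      _ = g := mul_one g
  -- the decomposition identity
  have hdec : ∀ p : MvPolynomial (Fin d) ℝ, p.totalDegree < q →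
      Dapply d c p z = (∑ j, w0 j * eval (fun i => y j i) p)
        + (eval (fun i => z i) p) * (Dapply d c 1 z - ∑ j, w0 j) := by
    intro p hdeg
    set a : ℝ := eval (fun i => z i) p with ha
    have hmem : p - C a ∈ Vt := by
      constructor
      · exact lt_of_le_of_lt (totalDegree_sub p (C a)) (by
          simp only [totalDegree_C, max_eq_left (Nat.zero_le _)]
          exact hdeg)
      · intro j hj
        rw [map_sub, eval_C]
        have : eval (fun i => y j i) p = a := by rw [hj, ha]
        rw [this, sub_self]
    have h1 := hwEV ⟨p - C a, hmem⟩
    rw [hwlapp] at h1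
    have h2 : ∀ j, EV (⟨p - C a, hmem⟩ : Vt) j = eval (fun i => y j i) p - a := by
      intro j
      rw [hEVapp]
      simp [map_sub, eval_C]
    have h3 : LV (⟨p - C a, hmem⟩ : Vt) = Dapply d c p z - a * Dapply d c 1 z := by
      rw [hLVapp]
      have hcoe : ((⟨p - C a, hmem⟩ : Vt) : MvPolynomial (Fin d) ℝ) = p - a • 1 := by
        rw [smul_eq_C_mul, mul_one]
      rw [hcoe]
      have := (GrowthLP.L d c z).map_sub p (a • (1 : MvPolynomial (Fin d) ℝ))
      have h4 := (GrowthLP.L d c z).map_smul a (1 : MvPolynomial (Fin d) ℝ)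
      calc Dapply d c (p - a • 1) z
          = Dapply d c p z - Dapply d c (a • (1:MvPolynomial (Fin d) ℝ)) z := this
        _ = Dapply d c p z - a * Dapply d c 1 z := by rw [show Dapply d c (a • (1:MvPolynomial (Fin d) ℝ)) z = a * Dapply d c 1 z from h4]
    rw [h3] at h1
    have h5 : ∑ j, EV (⟨p - C a, hmem⟩ : Vt) j * w0 j
        = ∑ j, (eval (fun i => y j i) p - a) * w0 j := by
      exact Finset.sum_congr rfl fun j _ => by rw [h2 j]
    rw [h5] at h1
    have h6 : ∑ j, (eval (fun i => y j i) p - a) * w0 j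
        = (∑ j, w0 j * eval (fun i => y j i) p) - a * ∑ j, w0 j := by
      calc ∑ j, (eval (fun i => y j i) p - a) * w0 j
          = ∑ j, (w0 j * eval (fun i => y j i) p - a * w0 j) :=
            Finset.sum_congr rfl fun j _ => by ring
        _ = (∑ j, w0 j * eval (fun i => y j i) p) - ∑ j, a * w0 j :=
            Finset.sum_sub_distrib _ _
        _ = (∑ j, w0 j * eval (fun i => y j i) p) - a * ∑ j, w0 j := by
            rw [← Finset.mul_sum]
    rw [h6] at h1
    linarith
  -- choose the final weights
  by_cases hex : ∃ j0, y j0 = z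
  · obtain ⟨j0, hj0⟩ := hex
    set δ : ℝ := Dapply d c 1 z - ∑ j, w0 j with hδ
    set w : Fin n → ℝ := fun j => w0 j + (if j = j0 then δ else 0) with hw
    have hwexact : ∀ p : MvPolynomial (Fin d) ℝ, p.totalDegree < q →
        Dapply d c p z = ∑ j, w j * eval (fun i => y j i) p := by
      intro p hdeg
      have h1 : ∑ j, w j * eval (fun i => y j i) p
          = (∑ j, w0 j * eval (fun i => y j i) p) + δ * eval (fun i => y j0 i) p := by
        simp only [hw, add_mul, Finset.sum_add_distrib]
        congr 1
        rw [Finset.sum_eq_single j0]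
        · rw [if_pos rfl]
        · intro j _ hj; rw [if_neg hj, zero_mul]
        · intro h; exact absurd (Finset.mem_univ j0) h
      rw [h1, hdec p hdeg]
      have : eval (fun i => y j0 i) p = eval (fun i => z i) p := by rw [hj0]
      rw [this, hδ]
      ring
    have hcosts : ∑ j, |w j| * ‖y j - z‖ ^ q = ∑ j, |w0 j| * ‖y j - z‖ ^ q := by
      refine Finset.sum_congr rfl fun j _ => ?_
      by_cases hj : j = j0
      · rw [hj, hbzero j0 hj0, mul_zero, mul_zero]
      · simp only [hw, if_neg hj, add_zero]
    have hcostw : ∑ j, |w j| * ‖y j - z‖ ^ q ≤ g := by rw [hcosts]; exact hcost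
    -- weak duality
    have hweak : ∀ w' : Fin n → ℝ,
        (∀ p : MvPolynomial (Fin d) ℝ, p.totalDegree < q →
          Dapply d c p z = ∑ j, w' j * eval (fun i => y j i) p) →
        g ≤ ∑ j, |w' j| * ‖y j - z‖ ^ q := by
      intro w' hw'
      refine csSup_le ⟨0, h0A⟩ fun r hr => ?_
      obtain ⟨p, h1, h2, rfl⟩ := hr
      rw [hw' p h1]
      refine Finset.sum_le_sum fun j _ => ?_
      calc w' j * eval (fun i => y j i) p ≤ |w' j * eval (fun i => y j i) p| := le_abs_self _
        _ = |w' j| * |eval (fun i => y j i) p| := abs_mul _ _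
        _ ≤ |w' j| * ‖y j - z‖ ^ q := mul_le_mul_of_nonneg_left (h2 j) (abs_nonneg _)
    have hgeq : g = ∑ j, |w j| * ‖y j - z‖ ^ q :=
      le_antisymm (hweak w hwexact) hcostw
    exact ⟨w, hwexact, by rw [hgrowth2, hgeq], fun w' hw' => hgeq ▸ hweak w' hw'⟩
  · -- no degenerate point
    push_neg at hex
    have hone : (1 : MvPolynomial (Fin d) ℝ) ∈ Vt :=
      ⟨by simpa [totalDegree_one] using hq1, fun j hj => absurd hj (hex j)⟩
    have hδ0 : Dapply d c 1 z - ∑ j, w0 j = 0 := by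
      have h1 := hwEV ⟨1, hone⟩
      rw [hwlapp] at h1
      have h2 : ∀ j, EV (⟨1, hone⟩ : Vt) j = 1 := fun j => by rw [hEVapp]; simp
      have h3 : LV (⟨1, hone⟩ : Vt) = Dapply d c 1 z := hLVapp _
      rw [h3] at h1
      have h4 : ∑ j, EV (⟨1, hone⟩ : Vt) j * w0 j = ∑ j, w0 j := by
        refine Finset.sum_congr rfl fun j _ => by rw [h2 j, one_mul]
      rw [h4] at h1
      linarith
    have hwexact : ∀ p : MvPolynomial (Fin d) ℝ, p.totalDegree < q →
        Dapply d c p z = ∑ j, w0 j * eval (fun i => y j i) p := by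
      intro p hdeg
      rw [hdec p hdeg, hδ0, mul_zero, add_zero]
    have hweak : ∀ w' : Fin n → ℝ,
        (∀ p : MvPolynomial (Fin d) ℝ, p.totalDegree < q →
          Dapply d c p z = ∑ j, w' j * eval (fun i => y j i) p) →
        g ≤ ∑ j, |w' j| * ‖y j - z‖ ^ q := by
      intro w' hw'
      refine csSup_le ⟨0, h0A⟩ fun r hr => ?_
      obtain ⟨p, h1, h2, rfl⟩ := hr
      rw [hw' p h1]
      refine Finset.sum_le_sum fun j _ => ?_
      calc w' j * eval (fun i => y j i) p ≤ |w' j * eval (fun i => y j i) p| := le_abs_self _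
        _ = |w' j| * |eval (fun i => y j i) p| := abs_mul _ _
        _ ≤ |w' j| * ‖y j - z‖ ^ q := mul_le_mul_of_nonneg_left (h2 j) (abs_nonneg _)
    have hgeq : g = ∑ j, |w0 j| * ‖y j - z‖ ^ q :=
      le_antisymm (hweak w0 hwexact) hcost
    exact ⟨w0, hwexact, by rw [hgrowth2, hgeq], fun w' hw' => hgeq ▸ hweak w' hw'⟩
end
end

section
/- Consider the consistent system [[R₁, R₂],[0, T]] ṽ = [b̃; 0] with R₁ ∈ ℝ^{s×s} invertible. If ṽ° is the basic solution with last components zero (R₁ ṽ°₁ = b̃, ṽ°₂ = 0) and ṽ** is the minimum 2-norm solution, then ‖ṽ°‖₂ ≤ (1 + ‖R₁⁻¹R₂‖₂²)^{1/2} ‖ṽ**‖₂. -/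
noncomputable section
open Matrix

/-- Spectral (operator) norm of a real matrix. -/
def specNorm {α β : Type*} [Fintype α] [Fintype β] [DecidableEq β] (M : Matrix α β ℝ) : ℝ :=
  ‖LinearMap.toContinuousLinearMap (Matrix.toEuclideanLin M)‖

/-- Euclidean norm of a vector. -/
def evnorm {ι : Type*} [Fintype ι] (v : ι → ℝ) : ℝ :=
  Real.sqrt (∑ j, v j ^ 2)

lemma evnorm_eq {ι : Type*} [Fintype ι] (v : ι → ℝ) :
    evnorm v = ‖(WithLp.equiv 2 (ι → ℝ)).symm v‖ := by
  rw [EuclideanSpace.norm_eq]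
  simp [evnorm, Real.norm_eq_abs, sq_abs]

lemma evnorm_nonneg {ι : Type*} [Fintype ι] (v : ι → ℝ) : 0 ≤ evnorm v :=
  Real.sqrt_nonneg _

/-- For the consistent block system `[[R₁,R₂],[0,T]] ṽ = [b̃;0]` with `R₁` invertible,
the basic solution `ṽ° = [R₁⁻¹ b̃; 0]` and the minimum 2-norm solution `ṽ**` satisfy
`‖ṽ°‖₂ ≤ (1 + ‖R₁⁻¹R₂‖₂²)^{1/2} ‖ṽ**‖₂`. -/
theorem basic_solution_norm_bound_block (s k ℓ : ℕ)
    (R₁ : Matrix (Fin s) (Fin s) ℝ) (hR₁ : IsUnit R₁.det)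
    (R₂ : Matrix (Fin s) (Fin ℓ) ℝ) (T : Matrix (Fin k) (Fin ℓ) ℝ)
    (bt : Fin s → ℝ)
    (hcons : ∃ v, fromBlocks R₁ R₂ 0 T *ᵥ v = Sum.elim bt 0)
    (vb : Fin s ⊕ Fin ℓ → ℝ) (hvb : vb = Sum.elim (R₁⁻¹ *ᵥ bt) 0)
    (vm : Fin s ⊕ Fin ℓ → ℝ)
    (hvm : fromBlocks R₁ R₂ 0 T *ᵥ vm = Sum.elim bt 0)
    (hmin : ∀ v : Fin s ⊕ Fin ℓ → ℝ,
      fromBlocks R₁ R₂ 0 T *ᵥ v = Sum.elim bt 0 → evnorm vm ≤ evnorm v) :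
    evnorm vb ≤ Real.sqrt (1 + specNorm (R₁⁻¹ * R₂) ^ 2) * evnorm vm := by
  set M := R₁⁻¹ * R₂ with hM
  set x : Fin s → ℝ := fun i => vm (Sum.inl i) with hx
  set y : Fin ℓ → ℝ := fun i => vm (Sum.inr i) with hy
  have hvm' : vm = Sum.elim x y := by ext (i|i) <;> rfl
  -- top block equation
  have htop : R₁ *ᵥ x + R₂ *ᵥ y = bt := by
    funext i
    have := congrFun hvm (Sum.inl i)
    rw [hvm', fromBlocks_mulVec] at this
    simpa using this
  have hw : R₁⁻¹ *ᵥ bt = x + M *ᵥ y := by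
    rw [← htop, mulVec_add, mulVec_mulVec, mulVec_mulVec, nonsing_inv_mul _ hR₁, one_mulVec]
  -- norms
  set a := evnorm x with ha
  set b := evnorm y with hb
  set c := specNorm M with hc
  have ha0 : 0 ≤ a := evnorm_nonneg _
  have hb0 : 0 ≤ b := evnorm_nonneg _
  have hc0 : 0 ≤ c := norm_nonneg _
  -- evnorm vb ≤ a + c * b
  have hvb_le : evnorm vb ≤ a + c * b := by
    have h1 : evnorm vb = evnorm (x + M *ᵥ y) := by
      rw [hvb, ← hw]
      simp only [evnorm, Fintype.sum_sum_type]
      simp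
    rw [h1, evnorm_eq]
    have hadd : (WithLp.equiv 2 ((Fin s) → ℝ)).symm (x + M *ᵥ y)
        = (WithLp.equiv 2 ((Fin s) → ℝ)).symm x + (WithLp.equiv 2 ((Fin s) → ℝ)).symm (M *ᵥ y) := by
      rfl
    rw [hadd]
    refine le_trans (norm_add_le _ _) ?_
    have h2 : ‖(WithLp.equiv 2 ((Fin s) → ℝ)).symm (M *ᵥ y)‖ ≤ c * b := by
      have := (LinearMap.toContinuousLinearMap (Matrix.toEuclideanLin M)).le_opNorm
        ((WithLp.equiv 2 ((Fin ℓ) → ℝ)).symm y)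
      simpa [hb, evnorm_eq, hc, specNorm, Matrix.toEuclideanLin_apply_piLp_toLp] using this
    have h3 : ‖(WithLp.equiv 2 ((Fin s) → ℝ)).symm x‖ = a := (evnorm_eq x).symm
    rw [h3]
    linarith
  -- evnorm vm = sqrt (a^2 + b^2)
  have hvm_eq : evnorm vm = Real.sqrt (a ^ 2 + b ^ 2) := by
    rw [ha, hb, evnorm, evnorm, evnorm,
      Real.sq_sqrt (Finset.sum_nonneg fun _ _ => sq_nonneg _),
      Real.sq_sqrt (Finset.sum_nonneg fun _ _ => sq_nonneg _)]
    rw [hvm']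
    simp [Fintype.sum_sum_type]
  -- Cauchy-Schwarz style inequality
  have key : a + c * b ≤ Real.sqrt (1 + c ^ 2) * Real.sqrt (a ^ 2 + b ^ 2) := by
    rw [← Real.sqrt_mul (by positivity)]
    rw [show a + c * b = Real.sqrt ((a + c * b) ^ 2) from
      (Real.sqrt_sq (by positivity)).symm]
    apply Real.sqrt_le_sqrt
    nlinarith [sq_nonneg (c * a - b)]
  rw [hvm_eq]
  exact le_trans hvb_le key
end
end
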